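/- arXiv:2407.15307 — 8 statements merged into one kernel-verified Lean document; each statement's English description precedes it below -/
import Mathlib

section
/- For every connected graph G of order n ≥ 2, eqdim(G) = 1 if and only if Δ(G) = n − 1. -/
/-- `S` is a distance-equalizer set of `G`. -/
def IsDistEqSet {V : Type*} (G : SimpleGraph V) (S : Set V) : Prop :=
  ∀ u v : V, u ∉ S → v ∉ S → u ≠ v → ∃ x ∈ S, G.dist u x = G.dist v x

/-- The equidistant dimension of `G`. -/
noncomputable def eqdim {V : Type*} (G : SimpleGraph V) : ℕ :=
  sInf {k | ∃ S : Finset V, IsDistEqSet G ↑S ∧ S.card = k}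

/-!
A single vertex `x` equalizes distances exactly when all other vertices lie at the same distance
from `x`. In a connected graph with at least two vertices `x` has a neighbour, so that common
distance is `1`, i.e. `x` is adjacent to every other vertex. Since the empty set equalizes
nothing once there are two vertices, `eqdim G = 1` means precisely that `G` has a universal vertex,
which is the same as `Δ(G) = n - 1`.
-/

namespace SimpleGraph

variable {V : Type*} (G : SimpleGraph V)

theorem isDistEqSet_singleton_iff (x : V) :
    IsDistEqSet G {x} ↔ ∀ u v, x ≠ u → x ≠ v → G.dist u x = G.dist v x := by
  simp only [IsDistEqSet, Set.mem_singleton_iff, exists_eq_left]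
  refine ⟨fun h u v hxu hxv ↦ ?_, fun h u v hux hvx _ ↦ h u v (Ne.symm hux) (Ne.symm hvx)⟩
  rcases eq_or_ne u v with rfl | huv
  · rfl
  · exact h u v (Ne.symm hxu) (Ne.symm hxv) huv

theorem Connected.isDistEqSet_singleton_iff_isUniversal [Nontrivial V] (hconn : G.Connected)
    (x : V) : IsDistEqSet G {x} ↔ G.IsUniversal x := by
  rw [isDistEqSet_singleton_iff]
  constructor
  · intro h u hxu
    obtain ⟨w, hxw⟩ := hconn.preconnected.exists_adj_of_nontrivial x
    rw [← dist_eq_one_iff_adj, dist_comm, h u w hxu hxw.ne, dist_comm, dist_eq_one_iff_adj.mpr hxw]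
  · intro h u v hxu hxv
    rw [dist_comm, dist_eq_one_iff_adj.mpr (h hxu), dist_comm, dist_eq_one_iff_adj.mpr (h hxv)]

theorem not_isDistEqSet_empty [Nontrivial V] : ¬IsDistEqSet G ∅ := fun h ↦ by
  obtain ⟨u, v, huv⟩ := exists_pair_ne V
  obtain ⟨x, hx, -⟩ := h u v (Set.notMem_empty u) (Set.notMem_empty v) huv
  exact hx

theorem eqdim_eq_one_iff [Nontrivial V] : eqdim G = 1 ↔ ∃ x, IsDistEqSet G {x} := by
  have hsingleton (x : V) : IsDistEqSet G ↑({x} : Finset V) ↔ IsDistEqSet G {x} := by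
    rw [Finset.coe_singleton]
  rw [eqdim]
  constructor
  · intro h
    obtain ⟨S, hS, hcard⟩ := h ▸ Nat.sInf_mem (Nat.nonempty_of_pos_sInf (h ▸ Nat.one_pos))
    obtain ⟨x, rfl⟩ := Finset.card_eq_one.mp hcard
    exact ⟨x, (hsingleton x).mp hS⟩
  · rintro ⟨x, hx⟩
    have hmem : 1 ∈ {k | ∃ S : Finset V, IsDistEqSet G ↑S ∧ S.card = k} :=
      ⟨{x}, (hsingleton x).mpr hx, Finset.card_singleton x⟩
    refine le_antisymm (Nat.sInf_le hmem) (Nat.one_le_iff_ne_zero.mpr fun h0 ↦ ?_)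
    rcases Nat.sInf_eq_zero.mp h0 with ⟨S, hS, hcard⟩ | hempty
    · rw [Finset.card_eq_zero.mp hcard, Finset.coe_empty] at hS
      exact G.not_isDistEqSet_empty hS
    · exact Set.nonempty_iff_ne_empty.mp ⟨1, hmem⟩ hempty

theorem maxDegree_eq_card_sub_one_iff [Fintype V] [DecidableRel G.Adj] [Nonempty V] :
    G.maxDegree = Fintype.card V - 1 ↔ ∃ x, G.IsUniversal x := by
  constructor
  · intro h
    obtain ⟨x, hx⟩ := G.exists_maximal_degree_vertex
    exact ⟨x, (G.degree_eq_card_sub_one x).mp (hx ▸ h)⟩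
  · rintro ⟨x, hx⟩
    have hdeg := (G.degree_eq_card_sub_one x).mpr hx
    have := G.maxDegree_lt_card_verts
    have := G.degree_le_maxDegree x
    omega

end SimpleGraph

theorem stmt0 {V : Type*} [Fintype V] (G : SimpleGraph V) [DecidableRel G.Adj]
    (hconn : G.Connected) (hn : 2 ≤ Fintype.card V) :
    eqdim G = 1 ↔ G.maxDegree = Fintype.card V - 1 := by
  have : Nontrivial V := Fintype.one_lt_card_iff_nontrivial.mp hn
  rw [G.eqdim_eq_one_iff, G.maxDegree_eq_card_sub_one_iff]
  exact exists_congr hconn.isDistEqSet_singleton_iff_isUniversal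
end

section
/- For every connected graph G of order n ≥ 2, eqdim(G) = 2 if and only if Δ(G) = n − 2. -/
/-!
If `{x, y}` is a distance-equalizer set, then any two vertices outside it agree in their
distance to `x` or in their distance to `y`, and such a pairwise "one of two coordinates agrees"
relation forces one coordinate to be constant outside `{x, y}`, say `d(·, x) ≡ k`. If `k = 1`,
`x` is adjacent to all vertices but `y`. Otherwise `y` is the only neighbour of `x`, so
`d(·, y) ≡ k - 1`: for `k = 2` the vertex `y` is adjacent to all but `x`, and `k ≥ 3` would
separate `{x, y}` from the other vertices. Conversely, if `x` is adjacent to all vertices but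
`y`, all other vertices are at distance `1` from `x`, so `{x, y}` equalizes. In the same way
`{w}` equalizes exactly when `w` is universal, so `eqdim G ≤ 2 ↔ n - 2 ≤ Δ` and
`eqdim G ≤ 1 ↔ n - 1 ≤ Δ`.
-/

theorem Set.Pairwise.forall_eq_or_forall_eq {α β : Type*} {s : Set α} {f g : α → β}
    (h : s.Pairwise fun u v => f u = f v ∨ g u = g v) :
    (∀ u ∈ s, ∀ v ∈ s, f u = f v) ∨ (∀ u ∈ s, ∀ v ∈ s, g u = g v) := by
  refine or_iff_not_imp_left.mpr fun hf => ?_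
  push Not at hf
  obtain ⟨a, ha, b, hb, hab⟩ := hf
  have hg : ∀ u ∈ s, g u = g a := by
    intro u hu
    by_cases hua : f u = f a
    · have hub : u ≠ b := by rintro rfl; exact hab hua.symm
      have hne : a ≠ b := by rintro rfl; exact hab rfl
      rw [(h hu hb hub).resolve_left (hua ▸ hab), (h ha hb hne).resolve_left hab]
    · exact (h hu ha fun e => hua (e ▸ rfl)).resolve_left hua
  intro u hu v hv
  rw [hg u hu, hg v hv]

namespace SimpleGraph

variable {V : Type*} {G : SimpleGraph V}

theorem Connected.dist_add_one_of_forall_adj_eq (hconn : G.Connected) {x y u : V}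
    (hy : ∀ w, G.Adj x w → w = y) (hux : u ≠ x) : G.dist u y + 1 = G.dist u x := by
  obtain ⟨p, hp⟩ := hconn.exists_walk_length_eq_dist x u
  cases p with
  | nil => exact absurd rfl hux.symm
  | @cons _ w _ hxw q =>
    obtain rfl := hy w hxw
    have hq : G.dist u w ≤ q.length := dist_comm (G := G) ▸ dist_le q
    have htri : G.dist u x ≤ G.dist u w + G.dist w x := hconn.dist_triangle
    have hwx : G.dist w x = 1 := dist_eq_one_iff_adj.mpr hxw.symm
    have hux : G.dist u x = q.length + 1 := dist_comm (G := G) ▸ hp.symm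
    omega

theorem Connected.forall_adj_or_forall_adj (hconn : G.Connected) {x y : V}
    (hx : ∀ u v, u ≠ x → u ≠ y → v ≠ x → v ≠ y → G.dist u x = G.dist v x) :
    (∀ u, u ≠ x → u ≠ y → G.Adj x u) ∨ (∀ u, u ≠ y → u ≠ x → G.Adj y u) := by
  by_cases hR : ∃ u₀, u₀ ≠ x ∧ u₀ ≠ y
  swap
  · push Not at hR
    exact .inl fun u hux huy => absurd (hR u hux) huy
  obtain ⟨u₀, hu₀x, hu₀y⟩ := hR
  have only_neighbor : ∀ {a b : V} {k : ℕ}, 2 ≤ k →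
      (∀ u, u ≠ a → u ≠ b → G.dist u a = k) → ∀ w, G.Adj a w → w = b := by
    intro a b k hk hd w haw
    by_contra hwb
    have := hd w haw.ne' hwb
    rw [dist_eq_one_iff_adj.mpr haw.symm] at this
    omega
  set k := G.dist u₀ x
  have hkx : ∀ u, u ≠ x → u ≠ y → G.dist u x = k :=
    fun u hux huy => hx u u₀ hux huy hu₀x hu₀y
  have hk : 1 ≤ k := hconn.pos_dist_of_ne hu₀x
  rcases (show k = 1 ∨ 2 ≤ k by omega) with hk1 | hk2
  · exact .inl fun u hux huy => (dist_eq_one_iff_adj.mp (hk1 ▸ hkx u hux huy)).symm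
  have hxy_only := only_neighbor hk2 hkx
  have hky : ∀ u, u ≠ y → u ≠ x → G.dist u y = k - 1 := fun u huy hux => by
    have := hconn.dist_add_one_of_forall_adj_eq hxy_only hux
    have := hkx u hux huy
    omega
  rcases (show k = 2 ∨ 3 ≤ k by omega) with hk2 | hk3
  · exact .inr fun u huy hux =>
      (dist_eq_one_iff_adj.mp ((hky u huy hux).trans (by omega))).symm
  have hyx_only := only_neighbor (by omega) hky
  have := hconn.dist_add_one_of_forall_adj_eq hxy_only hu₀x
  have := hconn.dist_add_one_of_forall_adj_eq hyx_only hu₀y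
  omega

section Finite

variable [Fintype V] [DecidableRel G.Adj]

theorem card_sub_two_le_degree_iff (x : V) :
    Fintype.card V - 2 ≤ G.degree x ↔ ∃ y, ∀ u, u ≠ x → u ≠ y → G.Adj x u := by
  classical
  have := G.degree_compl x
  have := G.degree_lt_card_verts x
  have : Nonempty V := ⟨x⟩
  rw [show Fintype.card V - 2 ≤ G.degree x ↔ Gᶜ.degree x ≤ 1 by omega,
    ← card_neighborFinset_eq_degree, Finset.card_le_one_iff_subset_singleton]
  simp only [Finset.subset_singleton_iff', mem_neighborFinset, compl_adj]
  exact exists_congr fun y => forall_congr' fun u => by rw [ne_comm]; tauto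

theorem card_sub_one_le_degree_iff (x : V) :
    Fintype.card V - 1 ≤ G.degree x ↔ G.IsUniversal x := by
  have := G.degree_lt_card_verts x
  rw [← degree_eq_card_sub_one]
  omega

theorem le_maxDegree_iff [Nonempty V] {k : ℕ} :
    k ≤ G.maxDegree ↔ ∃ x, k ≤ G.degree x := by
  obtain ⟨x, hx⟩ := G.exists_maximal_degree_vertex
  exact ⟨fun h => ⟨x, hx ▸ h⟩, fun ⟨y, hy⟩ => hy.trans (G.degree_le_maxDegree y)⟩

end Finite

end SimpleGraph

namespace IsDistEqSet

open SimpleGraph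

variable {V : Type*} {G : SimpleGraph V}

theorem mono {S T : Set V} (hS : IsDistEqSet G S) (hST : S ⊆ T) : IsDistEqSet G T :=
  fun u v hu hv huv =>
    let ⟨x, hx, hd⟩ := hS u v (fun h => hu (hST h)) (fun h => hv (hST h)) huv
    ⟨x, hST hx, hd⟩

theorem univ : IsDistEqSet G Set.univ :=
  fun u _ hu _ _ => absurd (Set.mem_univ u) hu

theorem singleton_iff [Nontrivial V] (hconn : G.Connected) {w : V} :
    IsDistEqSet G {w} ↔ G.IsUniversal w := by
  refine ⟨fun hS => ?_, fun hw u v hu hv _ => ⟨w, rfl, ?_⟩⟩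
  · obtain ⟨z, hz⟩ := not_forall_not.mp (hconn.preconnected.not_isIsolated w)
    intro u hwu
    by_cases huz : u = z
    · exact huz ▸ hz
    obtain ⟨_, rfl, hd⟩ := hS u z hwu.symm hz.ne.symm huz
    rw [dist_eq_one_iff_adj.mpr hz.symm] at hd
    exact (dist_eq_one_iff_adj.mp hd).symm
  · rw [dist_eq_one_iff_adj.mpr (hw (Ne.symm hu)).symm,
      dist_eq_one_iff_adj.mpr (hw (Ne.symm hv)).symm]

theorem pair_of_forall_adj {x y : V} (h : ∀ u, u ≠ x → u ≠ y → G.Adj x u) :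
    IsDistEqSet G {x, y} := by
  intro u v hu hv _
  simp only [Set.mem_insert_iff, Set.mem_singleton_iff, not_or] at hu hv
  refine ⟨x, .inl rfl, ?_⟩
  rw [dist_eq_one_iff_adj.mpr (h u hu.1 hu.2).symm, dist_eq_one_iff_adj.mpr (h v hv.1 hv.2).symm]

theorem exists_forall_adj_of_pair (hconn : G.Connected) {x y : V} (h : IsDistEqSet G {x, y}) :
    ∃ z w, ∀ u, u ≠ z → u ≠ w → G.Adj z u := by
  have hpair : {u | u ≠ x ∧ u ≠ y}.Pairwise
      fun u v => G.dist u x = G.dist v x ∨ G.dist u y = G.dist v y := by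
    intro u hu v hv huv
    obtain ⟨t, ht | ht, hd⟩ := h u v (by simpa using hu) (by simpa using hv) huv
    · exact .inl (ht ▸ hd)
    · exact .inr (ht ▸ hd)
  rcases hpair.forall_eq_or_forall_eq with hc | hc
  · rcases hconn.forall_adj_or_forall_adj (fun u v h1 h2 h3 h4 => hc u ⟨h1, h2⟩ v ⟨h3, h4⟩)
      with h' | h' <;> exact ⟨_, _, h'⟩
  · rcases hconn.forall_adj_or_forall_adj (fun u v h1 h2 h3 h4 => hc u ⟨h2, h1⟩ v ⟨h4, h3⟩)
      with h' | h' <;> exact ⟨_, _, h'⟩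

end IsDistEqSet

section eqdim

variable {V : Type*} {G : SimpleGraph V}

theorem eqdim_le_card {S : Finset V} (hS : IsDistEqSet G S) : eqdim G ≤ S.card :=
  Nat.sInf_le ⟨S, hS, rfl⟩

variable [Fintype V]

theorem eqdim_le_iff {k : ℕ} (hk : k ≤ Fintype.card V) :
    eqdim G ≤ k ↔ ∃ S : Finset V, IsDistEqSet G S ∧ S.card = k := by
  refine ⟨fun h => ?_, fun ⟨_, hS, hSk⟩ => hSk ▸ eqdim_le_card hS⟩
  have hne : {k | ∃ S : Finset V, IsDistEqSet G ↑S ∧ S.card = k}.Nonempty :=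
    ⟨_, Finset.univ, by simpa using IsDistEqSet.univ, rfl⟩
  obtain ⟨S, hS, hScard⟩ := Nat.sInf_mem hne
  obtain ⟨T, hST, hT⟩ := Finset.exists_superset_card_eq (hScard.trans_le h) hk
  exact ⟨T, hS.mono (Finset.coe_subset.mpr hST), hT⟩

variable [DecidableRel G.Adj]

theorem eqdim_le_one_iff [Nontrivial V] (hconn : G.Connected) :
    eqdim G ≤ 1 ↔ Fintype.card V - 1 ≤ G.maxDegree := by
  simp only [eqdim_le_iff Fintype.card_pos, Finset.card_eq_one, SimpleGraph.le_maxDegree_iff,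
    SimpleGraph.card_sub_one_le_degree_iff, ← IsDistEqSet.singleton_iff hconn]
  exact ⟨fun ⟨_, hS, w, hw⟩ => ⟨w, by simpa [hw] using hS⟩,
    fun ⟨w, hw⟩ => ⟨{w}, by simpa, w, rfl⟩⟩

theorem eqdim_le_two_iff (hconn : G.Connected) (hn : 2 ≤ Fintype.card V) :
    eqdim G ≤ 2 ↔ Fintype.card V - 2 ≤ G.maxDegree := by
  classical
  have : Nonempty V := hconn.nonempty
  simp only [SimpleGraph.le_maxDegree_iff, SimpleGraph.card_sub_two_le_degree_iff]
  constructor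
  · intro h
    obtain ⟨_, hS, hcard⟩ := (eqdim_le_iff hn).mp h
    obtain ⟨x, y, -, rfl⟩ := Finset.card_eq_two.mp hcard
    rw [Finset.coe_pair] at hS
    exact hS.exists_forall_adj_of_pair hconn
  · rintro ⟨x, y, h⟩
    have hS : IsDistEqSet G ↑({x, y} : Finset V) := by
      simpa using IsDistEqSet.pair_of_forall_adj h
    exact (eqdim_le_card hS).trans Finset.card_le_two

end eqdim

theorem stmt1 {V : Type*} [Fintype V] (G : SimpleGraph V) [DecidableRel G.Adj]
    (hconn : G.Connected) (hn : 2 ≤ Fintype.card V) :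
    eqdim G = 2 ↔ G.maxDegree = Fintype.card V - 2 := by
  have : Nontrivial V := Fintype.one_lt_card_iff_nontrivial.mp hn
  have h₁ := eqdim_le_one_iff hconn
  have h₂ := eqdim_le_two_iff hconn hn
  omega
end

section
/- If G is a connected graph of order n with Δ(G) < n − 2, then eqdim(G) ≥ 3. -/
open SimpleGraph

private lemma dist_getVert_le {V : Type*} {G : SimpleGraph V} (hconn : G.Connected)
    {u v : V} (p : G.Walk u v) (i : ℕ) : G.dist u (p.getVert i) ≤ i := by
  induction i with
  | zero => simp [p.getVert_zero, SimpleGraph.dist_self]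
  | succ i ih =>
    by_cases hi : i < p.length
    · have hadj := p.adj_getVert_succ hi
      have h1 : G.dist (p.getVert i) (p.getVert (i+1)) = 1 :=
        SimpleGraph.dist_eq_one_iff_adj.mpr hadj
      have h2 : G.dist u (p.getVert (i+1)) ≤
          G.dist u (p.getVert i) + G.dist (p.getVert i) (p.getVert (i+1)) :=
        hconn.dist_triangle
      omega
    · have h1 : p.getVert (i+1) = v := p.getVert_of_length_le (by omega)
      have h2 : p.getVert i = v := p.getVert_of_length_le (by omega)
      rw [h1, ← h2]
      exact ih.trans (Nat.le_succ i)

private lemma exists_dist_split {V : Type*} {G : SimpleGraph V} (hconn : G.Connected)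
    (u v : V) {i : ℕ} (hi : i ≤ G.dist u v) :
    ∃ w, G.dist u w = i ∧ G.dist w v = G.dist u v - i := by
  obtain ⟨p, hp⟩ := hconn.exists_walk_length_eq_dist u v
  refine ⟨p.getVert i, ?_⟩
  have h1 : G.dist u (p.getVert i) ≤ i := dist_getVert_le hconn p i
  have h2 : G.dist (p.getVert i) v ≤ p.length - i := by
    have hrev : p.reverse.getVert (p.length - i) = p.getVert i := by
      rw [p.getVert_reverse]
      congr 1
      omega
    have := dist_getVert_le hconn p.reverse (p.length - i)
    rw [hrev] at this
    rw [SimpleGraph.dist_comm]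
    exact this
  have h3 : G.dist u v ≤ G.dist u (p.getVert i) + G.dist (p.getVert i) v :=
    hconn.dist_triangle
  omega

private lemma degree_ge_of_adj {V : Type*} [Fintype V] [DecidableEq V] (G : SimpleGraph V)
    [DecidableRel G.Adj] (z : V) (A : Finset V) (h : ∀ u ∈ A, G.Adj z u) :
    A.card ≤ G.degree z := by
  rw [← SimpleGraph.card_neighborFinset_eq_degree]
  exact Finset.card_le_card fun u hu => (SimpleGraph.mem_neighborFinset G z u).mpr (h u hu)

private lemma main_aux {V : Type*} [Fintype V] [DecidableEq V] (G : SimpleGraph V)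
    [DecidableRel G.Adj] (hconn : G.Connected) (hΔ : G.maxDegree < Fintype.card V - 2)
    (S : Finset V) (hcardS : S.card = 2) (z : V) (hz : z ∈ S)
    (hP : ∀ u v : V, u ∉ S → v ∉ S → G.dist z u = G.dist z v) : False := by
  have hn : 3 ≤ Fintype.card V := by
    have := Nat.zero_le G.maxDegree
    omega
  have hScompl : Sᶜ.card = Fintype.card V - 2 := by
    rw [Finset.card_compl, hcardS]
  have hne : Sᶜ.Nonempty := by
    rw [← Finset.card_pos, hScompl]; omega
  obtain ⟨u₀, hu₀⟩ := hne
  rw [Finset.mem_compl] at hu₀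
  set k := G.dist z u₀ with hk0
  have hkpos : 1 ≤ k := by
    have : u₀ ≠ z := fun h => hu₀ (h ▸ hz)
    exact hconn.pos_dist_of_ne (fun h => this h.symm)
  have hk : ∀ u, u ∉ S → G.dist z u = k := fun u hu => hP u u₀ hu hu₀
  -- obtain the other element of S
  obtain ⟨a, b, hab, hSab⟩ := Finset.card_eq_two.mp hcardS
  have hzab : z = a ∨ z = b := by
    rw [hSab] at hz; simpa using hz
  obtain ⟨y, hyz, hSy⟩ : ∃ y, y ≠ z ∧ S = {z, y} := by
    rcases hzab with h | h
    · exact ⟨b, by rw [h]; exact fun hh => hab hh.symm, by rw [hSab, h]⟩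
    · exact ⟨a, by rw [h]; exact fun hh => hab hh, by rw [hSab, h, Finset.pair_comm]⟩
  have hadj : ∃ t, ∀ u ∈ Sᶜ, G.Adj t u := by
    rcases Nat.lt_or_ge k 2 with hk2 | hk2
    · -- k = 1 : z adjacent to everything outside S
      refine ⟨z, fun u hu => ?_⟩
      rw [Finset.mem_compl] at hu
      have : G.dist z u = 1 := by have := hk u hu; omega
      exact SimpleGraph.dist_eq_one_iff_adj.mp this
    · -- k ≥ 2 : y adjacent to everything outside S
      refine ⟨y, fun u hu => ?_⟩
      rw [Finset.mem_compl] at hu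
      have hdu : G.dist z u = k := hk u hu
      obtain ⟨w, hw1, hw2⟩ := exists_dist_split hconn z u (i := k - 1) (by omega)
      rw [hdu] at hw2
      have hwz : w ≠ z := by
        intro h; rw [h, SimpleGraph.dist_self] at hw1; omega
      have hwS : w ∈ S := by
        by_contra hwS
        have := hk w hwS
        omega
      have hwy : w = y := by
        rw [hSy] at hwS
        rcases Finset.mem_insert.mp hwS with h | h
        · exact absurd h hwz
        · simpa using h
      have : G.dist w u = 1 := by omega
      rw [hwy] at this
      exact SimpleGraph.dist_eq_one_iff_adj.mp this
  obtain ⟨t, ht⟩ := hadj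
  have hdeg : Fintype.card V - 2 ≤ G.degree t := by
    have := degree_ge_of_adj G t Sᶜ ht
    rwa [hScompl] at this
  have := G.degree_le_maxDegree t
  omega

theorem stmt2 {V : Type*} [Fintype V] (G : SimpleGraph V) [DecidableRel G.Adj]
    (hconn : G.Connected) (hΔ : G.maxDegree < Fintype.card V - 2) :
    3 ≤ eqdim G := by
  classical
  have hn : 3 ≤ Fintype.card V := by
    have := Nat.zero_le G.maxDegree
    omega
  by_contra hlt
  push_neg at hlt
  have hmem : eqdim G ∈ {k | ∃ S : Finset V, IsDistEqSet G ↑S ∧ S.card = k} := by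
    apply Nat.sInf_mem
    exact ⟨Fintype.card V, Finset.univ,
      fun u v hu _ _ => absurd (by simp : u ∈ (↑(Finset.univ : Finset V) : Set V)) hu,
      Finset.card_univ⟩
  obtain ⟨S, hS, hcard⟩ := hmem
  have hS' : ∀ u v : V, u ∉ S → v ∉ S → u ≠ v → ∃ x ∈ S, G.dist u x = G.dist v x := by
    intro u v hu hv huv
    obtain ⟨x, hx, hd⟩ := hS u v (by simpa using hu) (by simpa using hv) huv
    exact ⟨x, by simpa using hx, hd⟩
  have hc2 : S.card ≤ 2 := by omega
  interval_cases h : S.card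
  · -- card 0
    rw [Finset.card_eq_zero] at h
    obtain ⟨a, b, hab⟩ := Fintype.exists_pair_of_one_lt_card (α := V) (by omega)
    obtain ⟨x, hx, -⟩ := hS' a b (by simp [h]) (by simp [h]) hab
    simp [h] at hx
  · -- card 1
    obtain ⟨x, hx⟩ := Finset.card_eq_one.mp h
    have hadj : ∀ u, u ≠ x → G.Adj x u := by
      intro u hu
      set k := G.dist x u with hk0
      have hkpos : 1 ≤ k := hconn.pos_dist_of_ne (fun hh => hu hh.symm)
      rcases Nat.lt_or_ge k 2 with hk2 | hk2
      · exact SimpleGraph.dist_eq_one_iff_adj.mp (by omega)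
      · exfalso
        obtain ⟨w, hw1, hw2⟩ := exists_dist_split hconn x u (i := 1) (by omega)
        have hwx : w ≠ x := by
          intro hh; rw [hh, SimpleGraph.dist_self] at hw1; omega
        have hwu : w ≠ u := by
          intro hh; rw [hh, SimpleGraph.dist_self] at hw2; omega
        obtain ⟨p, hp, hd⟩ := hS' u w (by simp [hx, hu]) (by simp [hx, hwx])
          (fun hh => hwu hh.symm)
        rw [hx, Finset.mem_singleton] at hp
        rw [hp] at hd
        rw [SimpleGraph.dist_comm (u := u) (v := x),
          SimpleGraph.dist_comm (u := w) (v := x)] at hd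
        omega
    have hdeg : Fintype.card V - 1 ≤ G.degree x := by
      have := degree_ge_of_adj G x (Finset.univ.erase x)
        (fun u hu => hadj u (Finset.ne_of_mem_erase hu))
      rwa [Finset.card_erase_of_mem (Finset.mem_univ x), Finset.card_univ] at this
    have := G.degree_le_maxDegree x
    omega
  · -- card 2
    obtain ⟨x, y, hxy, hSxy⟩ := Finset.card_eq_two.mp h
    -- cross lemma: all outside vertices equidistant from x, or all from y
    have hdisj : ∀ u v : V, u ∉ S → v ∉ S → u ≠ v →
        G.dist x u = G.dist x v ∨ G.dist y u = G.dist y v := by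
      intro u v hu hv huv
      obtain ⟨p, hp, hd⟩ := hS' u v hu hv huv
      rw [hSxy] at hp
      rcases Finset.mem_insert.mp hp with hh | hh
      · left; rw [hh] at hd
        rw [SimpleGraph.dist_comm (u := x) (v := u), SimpleGraph.dist_comm (u := x) (v := v)]
        exact hd
      · right; rw [Finset.mem_singleton] at hh; rw [hh] at hd
        rw [SimpleGraph.dist_comm (u := y) (v := u), SimpleGraph.dist_comm (u := y) (v := v)]
        exact hd
    have hcross : (∀ u v : V, u ∉ S → v ∉ S → G.dist x u = G.dist x v) ∨
        (∀ u v : V, u ∉ S → v ∉ S → G.dist y u = G.dist y v) := by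
      by_cases hPx : ∀ u v : V, u ∉ S → v ∉ S → G.dist x u = G.dist x v
      · exact Or.inl hPx
      · right
        push_neg at hPx
        obtain ⟨p, q, hp, hq, hpq⟩ := hPx
        have hpqne : p ≠ q := fun hh => hpq (hh ▸ rfl)
        have hyq : G.dist y p = G.dist y q := by
          rcases hdisj p q hp hq hpqne with hh | hh
          · exact absurd hh hpq
          · exact hh
        have hall : ∀ v, v ∉ S → G.dist y v = G.dist y p := by
          intro v hv
          by_cases hvp : v = p
          · rw [hvp]
          by_cases hvq : v = q
          · rw [hvq, hyq]
          rcases hdisj v p hv hp hvp with h1 | h1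
          · rcases hdisj v q hv hq hvq with h2 | h2
            · exact absurd (h1 ▸ h2) hpq
            · rw [h2, hyq]
          · exact h1
        intro u v hu hv
        rw [hall u hu, hall v hv]
    rcases hcross with hP | hP
    · exact absurd (main_aux G hconn hΔ S h x
        (by rw [hSxy]; exact Finset.mem_insert_self x _) hP) not_false
    · exact absurd (main_aux G hconn hΔ S h y
        (by rw [hSxy]; simp) hP) not_false
end

section
/- For every connected graph G of order n ≥ 2, eqdim(G) ≤ n − Δ(G). -/
theorem stmt4 {V : Type*} [Fintype V] (G : SimpleGraph V) [DecidableRel G.Adj]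
    (hconn : G.Connected) (hn : 2 ≤ Fintype.card V) :
    eqdim G ≤ Fintype.card V - G.maxDegree := by
  classical
  have : Nonempty V := Fintype.card_pos_iff.mp (by omega)
  obtain ⟨v, hv⟩ := G.exists_maximal_degree_vertex
  apply Nat.sInf_le
  refine ⟨(G.neighborFinset v)ᶜ, ?_, ?_⟩
  · intro u w hu hw huw
    simp only [Finset.coe_compl, Set.mem_compl_iff, Finset.mem_coe,
      SimpleGraph.mem_neighborFinset, not_not] at hu hw
    refine ⟨v, ?_, ?_⟩
    · simp [SimpleGraph.mem_neighborFinset]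
    · rw [SimpleGraph.dist_eq_one_iff_adj.mpr hu.symm,
        SimpleGraph.dist_eq_one_iff_adj.mpr hw.symm]
  · rw [Finset.card_compl, SimpleGraph.card_neighborFinset_eq_degree, hv]
end

section
/- For every connected graph G of order n ≥ 2 with diameter 2, eqdim(G) ≤ n − α(G), where α(G) is the independence number of G. -/
theorem stmt6 {V : Type*} [Fintype V] (G : SimpleGraph V)
    (hconn : G.Connected) (hn : 2 ≤ Fintype.card V) (hdiam : G.diam = 2) :
    eqdim G ≤ Fintype.card V - Gᶜ.cliqueNum := by
  classical
  obtain ⟨A, hclique, hcard⟩ := Gᶜ.exists_isNClique_cliqueNum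
  have hediam : G.ediam ≠ ⊤ :=
    SimpleGraph.ediam_ne_top_of_diam_ne_zero (by omega)
  have hSdes : IsDistEqSet G ↑(Aᶜ : Finset V) := by
    intro u v hu hv huv
    simp only [Finset.coe_compl, Set.mem_compl_iff, Finset.mem_coe, not_not] at hu hv
    have hadj : Gᶜ.Adj u v := hclique hu hv huv
    have hnadj : ¬ G.Adj u v := hadj.2
    have hd2 : G.dist u v = 2 := by
      have hle : G.dist u v ≤ 2 := hdiam ▸ SimpleGraph.dist_le_diam hediam
      have h0 : G.dist u v ≠ 0 :=
        SimpleGraph.dist_ne_zero_iff_ne_and_reachable.mpr ⟨huv, hconn.preconnected u v⟩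
      have h1 : G.dist u v ≠ 1 := fun h =>
        hnadj (SimpleGraph.dist_eq_one_iff_adj.mp h)
      omega
    obtain ⟨p, hp⟩ := SimpleGraph.exists_walk_of_dist_ne_zero (by omega : G.dist u v ≠ 0)
    rw [hd2] at hp
    set x := p.getVert 1 with hx
    have hux : G.Adj u x := by
      have := p.adj_getVert_succ (i := 0) (by omega)
      simpa [SimpleGraph.Walk.getVert_zero] using this
    have hxv : G.Adj x v := by
      have := p.adj_getVert_succ (i := 1) (by omega)
      have h2 : p.getVert 2 = v := by
        have := p.getVert_length
        rwa [hp] at this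
      rwa [h2] at this
    refine ⟨x, ?_, ?_⟩
    · simp only [Finset.coe_compl, Set.mem_compl_iff, Finset.mem_coe]
      intro hxA
      exact (hclique hu hxA (G.ne_of_adj hux)).2 hux
    · rw [SimpleGraph.dist_eq_one_iff_adj.mpr hux,
        SimpleGraph.dist_eq_one_iff_adj.mpr hxv.symm]
  have hmem : Fintype.card V - Gᶜ.cliqueNum ∈
      {k | ∃ S : Finset V, IsDistEqSet G ↑S ∧ S.card = k} := by
    exact ⟨Aᶜ, hSdes, by rw [Finset.card_compl, hcard]⟩
  exact Nat.sInf_le hmem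
end

section
/- For n ≥ 5, in the convex polytope graph T_n, for every index i, no vertex w of T_n is equidistant from b_i and c_i, i.e., there is no w with d(b_i, w) = d(c_i, w). -/
/-- The convex polytope graph `T_n` on vertex layers a=0, b=1, c=2, d=3. -/
def TGraph (n : ℕ) : SimpleGraph (Fin 4 × ZMod n) :=
  SimpleGraph.fromRel (fun x y =>
    (x.1 = y.1 ∧ y.2 = x.2 + 1) ∨
    (x.1 = 0 ∧ y.1 = 1 ∧ y.2 = x.2) ∨
    (x.1 = 1 ∧ y.1 = 2 ∧ y.2 = x.2) ∨
    (x.1 = 2 ∧ y.1 = 3 ∧ y.2 = x.2) ∨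
    (x.1 = 0 ∧ y.1 = 1 ∧ x.2 = y.2 + 1) ∨
    (x.1 = 2 ∧ y.1 = 3 ∧ y.2 = x.2 + 1))

namespace TAux

variable {n : ℕ}

lemma one_ne_zero' (hn : 5 ≤ n) : (1 : ZMod n) ≠ 0 := by
  haveI : Fact (1 < n) := ⟨by omega⟩
  exact one_ne_zero

lemma adj_layer (hn : 5 ≤ n) (l : Fin 4) (x : ZMod n) :
    (TGraph n).Adj (l, x) (l, x + 1) := by
  refine ⟨?_, Or.inl (Or.inl ⟨rfl, rfl⟩)⟩
  intro h
  have : x = x + 1 := congrArg Prod.snd h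
  exact one_ne_zero' hn (by linear_combination -this)

lemma adj_ab (x : ZMod n) : (TGraph n).Adj (0, x) (1, x) :=
  ⟨by simp, Or.inl (Or.inr (Or.inl ⟨rfl, rfl, rfl⟩))⟩

lemma adj_bc (x : ZMod n) : (TGraph n).Adj (1, x) (2, x) :=
  ⟨by simp, Or.inl (Or.inr (Or.inr (Or.inl ⟨rfl, rfl, rfl⟩)))⟩

lemma adj_cd (x : ZMod n) : (TGraph n).Adj (2, x) (3, x) :=
  ⟨by simp, Or.inl (Or.inr (Or.inr (Or.inr (Or.inl ⟨rfl, rfl, rfl⟩))))⟩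

lemma adj_ab' (x : ZMod n) : (TGraph n).Adj (0, x + 1) (1, x) :=
  ⟨by simp, Or.inl (Or.inr (Or.inr (Or.inr (Or.inr (Or.inl ⟨rfl, rfl, rfl⟩)))))⟩

lemma adj_cd' (x : ZMod n) : (TGraph n).Adj (2, x) (3, x + 1) :=
  ⟨by simp, Or.inl (Or.inr (Or.inr (Or.inr (Or.inr (Or.inr ⟨rfl, rfl, rfl⟩)))))⟩

/-- projection onto the top half -/
def π : Fin 4 × ZMod n → Fin 4 × ZMod n := fun p => (![0, 1, 1, 0] p.1, p.2)

/-- projection onto the bottom half -/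
def σ : Fin 4 × ZMod n → Fin 4 × ZMod n := fun p => (![3, 2, 2, 3] p.1, p.2)

/-- bottom indicator -/
def B : Fin 4 × ZMod n → ℕ := fun p => if p.1 = 2 ∨ p.1 = 3 then 1 else 0

/-- top indicator -/
def T : Fin 4 × ZMod n → ℕ := fun p => if p.1 = 0 ∨ p.1 = 1 then 1 else 0

lemma pi_hom (hn : 5 ≤ n) {x y : Fin 4 × ZMod n} (h : (TGraph n).Adj x y) :
    π x = π y ∨ ((TGraph n).Adj (π x) (π y) ∧ B x = B y) := by
  obtain ⟨x1, x2⟩ := x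
  obtain ⟨y1, y2⟩ := y
  rcases h.2 with h' | h' <;>
  rcases h' with ⟨h1, h2⟩ | ⟨h1, h2, h3⟩ | ⟨h1, h2, h3⟩ | ⟨h1, h2, h3⟩ | ⟨h1, h2, h3⟩ | ⟨h1, h2, h3⟩ <;>
    subst_vars
  · exact Or.inr ⟨by fin_cases x1 <;> exact adj_layer hn _ _, rfl⟩
  · exact Or.inr ⟨adj_ab _, rfl⟩
  · exact Or.inl rfl
  · exact Or.inr ⟨(adj_ab _).symm, rfl⟩
  · exact Or.inr ⟨adj_ab' _, rfl⟩
  · exact Or.inr ⟨(adj_ab' _).symm, rfl⟩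
  · exact Or.inr ⟨by fin_cases y1 <;> exact (adj_layer hn _ _).symm, rfl⟩
  · exact Or.inr ⟨(adj_ab _).symm, rfl⟩
  · exact Or.inl rfl
  · exact Or.inr ⟨adj_ab _, rfl⟩
  · exact Or.inr ⟨(adj_ab' _).symm, rfl⟩
  · exact Or.inr ⟨adj_ab' _, rfl⟩

lemma sigma_hom (hn : 5 ≤ n) {x y : Fin 4 × ZMod n} (h : (TGraph n).Adj x y) :
    σ x = σ y ∨ ((TGraph n).Adj (σ x) (σ y) ∧ T x = T y) := by
  obtain ⟨x1, x2⟩ := x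
  obtain ⟨y1, y2⟩ := y
  rcases h.2 with h' | h' <;>
  rcases h' with ⟨h1, h2⟩ | ⟨h1, h2, h3⟩ | ⟨h1, h2, h3⟩ | ⟨h1, h2, h3⟩ | ⟨h1, h2, h3⟩ | ⟨h1, h2, h3⟩ <;>
    subst_vars
  · exact Or.inr ⟨by fin_cases x1 <;> exact adj_layer hn _ _, rfl⟩
  · exact Or.inr ⟨(adj_cd _).symm, rfl⟩
  · exact Or.inl rfl
  · exact Or.inr ⟨adj_cd _, rfl⟩
  · exact Or.inr ⟨(adj_cd' _).symm, rfl⟩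
  · exact Or.inr ⟨adj_cd' _, rfl⟩
  · exact Or.inr ⟨by fin_cases y1 <;> exact (adj_layer hn _ _).symm, rfl⟩
  · exact Or.inr ⟨adj_cd _, rfl⟩
  · exact Or.inl rfl
  · exact Or.inr ⟨(adj_cd _).symm, rfl⟩
  · exact Or.inr ⟨adj_cd' _, rfl⟩
  · exact Or.inr ⟨(adj_cd' _).symm, rfl⟩

lemma B_le_one (u : Fin 4 × ZMod n) : B u ≤ 1 := by unfold B; split <;> omega
lemma T_le_one (u : Fin 4 × ZMod n) : T u ≤ 1 := by unfold T; split <;> omega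

lemma walk_shrink_top (hn : 5 ≤ n) :
    ∀ {u w : Fin 4 × ZMod n} (p : (TGraph n).Walk u w), w.1 = 0 ∨ w.1 = 1 →
      ∃ q : (TGraph n).Walk (π u) w, q.length + B u ≤ p.length := by
  intro u w p
  induction p with
  | nil =>
    rename_i u
    intro hw
    obtain ⟨u1, u2⟩ := u
    rcases hw with hw | hw <;> subst hw <;> exact ⟨SimpleGraph.Walk.nil, le_refl _⟩
  | @cons u v w h p ih =>
    intro hw
    obtain ⟨q, hq⟩ := ih hw
    rcases pi_hom hn h with heq | ⟨hadj, hB⟩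
    · refine ⟨q.copy heq.symm rfl, ?_⟩
      rw [SimpleGraph.Walk.length_copy, SimpleGraph.Walk.length_cons]
      have := B_le_one u
      omega
    · refine ⟨SimpleGraph.Walk.cons hadj q, ?_⟩
      rw [SimpleGraph.Walk.length_cons, SimpleGraph.Walk.length_cons]
      omega

lemma walk_shrink_bot (hn : 5 ≤ n) :
    ∀ {u w : Fin 4 × ZMod n} (p : (TGraph n).Walk u w), w.1 = 2 ∨ w.1 = 3 →
      ∃ q : (TGraph n).Walk (σ u) w, q.length + T u ≤ p.length := by
  intro u w p
  induction p with
  | nil =>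
    rename_i u
    intro hw
    obtain ⟨u1, u2⟩ := u
    rcases hw with hw | hw <;> subst hw <;> exact ⟨SimpleGraph.Walk.nil, le_refl _⟩
  | @cons u v w h p ih =>
    intro hw
    obtain ⟨q, hq⟩ := ih hw
    rcases sigma_hom hn h with heq | ⟨hadj, hT⟩
    · refine ⟨q.copy heq.symm rfl, ?_⟩
      rw [SimpleGraph.Walk.length_copy, SimpleGraph.Walk.length_cons]
      have := T_le_one u
      omega
    · refine ⟨SimpleGraph.Walk.cons hadj q, ?_⟩
      rw [SimpleGraph.Walk.length_cons, SimpleGraph.Walk.length_cons]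
      omega

lemma reach_layer (hn : 5 ≤ n) (l : Fin 4) (x : ZMod n) (m : ℕ) :
    (TGraph n).Reachable (l, x) (l, x + (m : ZMod n)) := by
  induction m with
  | zero =>
    have : ((0 : ℕ) : ZMod n) = 0 := Nat.cast_zero
    rw [this, add_zero]
  | succ m ih =>
    refine ih.trans ((adj_layer hn l (x + (m : ZMod n))).reachable.trans ?_)
    push_cast
    rw [add_assoc]

lemma reach_layer' (hn : 5 ≤ n) (l : Fin 4) (x y : ZMod n) :
    (TGraph n).Reachable (l, x) (l, y) := by
  haveI : NeZero n := ⟨by omega⟩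
  have h := reach_layer hn l x (y - x).val
  rwa [ZMod.natCast_val, ZMod.cast_id, add_sub_cancel] at h

lemma reach_vert (_hn : 5 ≤ n) (x : ZMod n) (l l' : Fin 4) :
    (TGraph n).Reachable (l, x) (l', x) := by
  have r01 := (adj_ab (n := n) x).reachable
  have r12 := (adj_bc (n := n) x).reachable
  have r23 := (adj_cd (n := n) x).reachable
  fin_cases l <;> fin_cases l'
  · rfl
  · exact r01
  · exact r01.trans r12
  · exact (r01.trans r12).trans r23
  · exact r01.symm
  · rfl
  · exact r12
  · exact r12.trans r23
  · exact (r01.trans r12).symm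
  · exact r12.symm
  · rfl
  · exact r23
  · exact ((r01.trans r12).trans r23).symm
  · exact (r12.trans r23).symm
  · exact r23.symm
  · rfl

lemma reach_all (hn : 5 ≤ n) (l : Fin 4) (x : ZMod n) (w : Fin 4 × ZMod n) :
    (TGraph n).Reachable (l, x) w := by
  obtain ⟨w1, w2⟩ := w
  exact (reach_vert hn x l w1).trans (reach_layer' hn w1 x w2)

end TAux

open TAux in
theorem stmt10 (n : ℕ) (hn : 5 ≤ n) (i : ZMod n) (w : Fin 4 × ZMod n) :
    (TGraph n).dist (1, i) w ≠ (TGraph n).dist (2, i) w := by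
  have htop : w.1 = 0 ∨ w.1 = 1 → (TGraph n).dist (1, i) w < (TGraph n).dist (2, i) w := by
    intro hw
    obtain ⟨p, hp⟩ := (reach_all hn 2 i w).exists_walk_length_eq_dist
    obtain ⟨q, hq⟩ := walk_shrink_top hn p hw
    have h1 : (TGraph n).dist (1, i) w ≤ q.length := SimpleGraph.dist_le q
    have hB : B ((2 : Fin 4), i) = 1 := rfl
    rw [hp] at hq
    omega
  have hbot : w.1 = 2 ∨ w.1 = 3 → (TGraph n).dist (2, i) w < (TGraph n).dist (1, i) w := by
    intro hw
    obtain ⟨p, hp⟩ := (reach_all hn 1 i w).exists_walk_length_eq_dist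
    obtain ⟨q, hq⟩ := walk_shrink_bot hn p hw
    have h1 : (TGraph n).dist (2, i) w ≤ q.length := SimpleGraph.dist_le q
    have hT : T ((1 : Fin 4), i) = 1 := rfl
    rw [hp] at hq
    omega
  have : w.1 = 0 ∨ w.1 = 1 ∨ w.1 = 2 ∨ w.1 = 3 := by
    obtain ⟨w1, w2⟩ := w; fin_cases w1 <;> simp
  rcases this with h | h | h | h
  · exact Nat.ne_of_lt (htop (Or.inl h))
  · exact Nat.ne_of_lt (htop (Or.inr h))
  · exact Nat.ne_of_gt (hbot (Or.inl h))
  · exact Nat.ne_of_gt (hbot (Or.inr h))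
end

section
/- For n ≥ 5, eqdim(T_n) ≥ 2n. -/
namespace TProofAux

open SimpleGraph

variable {n : ℕ}

lemma one_ne_zero' (hn : 5 ≤ n) : (1 : ZMod n) ≠ 0 := by
  haveI : Fact (1 < n) := ⟨by omega⟩
  exact one_ne_zero

lemma ring_adj (hn : 5 ≤ n) (l : Fin 4) (j : ZMod n) :
    (TGraph n).Adj (l, j) (l, j + 1) := by
  rw [TGraph, SimpleGraph.fromRel_adj]
  refine ⟨?_, Or.inl (Or.inl ⟨rfl, rfl⟩)⟩
  intro h
  have h2 : j = j + 1 := congrArg Prod.snd h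
  exact one_ne_zero' hn (left_eq_add.mp h2)

lemma adj01 (j : ZMod n) : (TGraph n).Adj (0, j) (1, j) := by
  rw [TGraph, SimpleGraph.fromRel_adj]
  exact ⟨by simp, Or.inl (Or.inr (Or.inl ⟨rfl, rfl, rfl⟩))⟩

lemma adj12 (j : ZMod n) : (TGraph n).Adj (1, j) (2, j) := by
  rw [TGraph, SimpleGraph.fromRel_adj]
  exact ⟨by simp, Or.inl (Or.inr (Or.inr (Or.inl ⟨rfl, rfl, rfl⟩)))⟩

lemma adj23 (j : ZMod n) : (TGraph n).Adj (2, j) (3, j) := by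
  rw [TGraph, SimpleGraph.fromRel_adj]
  exact ⟨by simp, Or.inl (Or.inr (Or.inr (Or.inr (Or.inl ⟨rfl, rfl, rfl⟩))))⟩

lemma chord_ab (j : ZMod n) : (TGraph n).Adj (0, j + 1) (1, j) := by
  rw [TGraph, SimpleGraph.fromRel_adj]
  exact ⟨by simp, Or.inl (Or.inr (Or.inr (Or.inr (Or.inr (Or.inl ⟨rfl, rfl, rfl⟩)))))⟩

lemma chord_cd (j : ZMod n) : (TGraph n).Adj (2, j) (3, j + 1) := by
  rw [TGraph, SimpleGraph.fromRel_adj]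
  exact ⟨by simp, Or.inl (Or.inr (Or.inr (Or.inr (Or.inr (Or.inr ⟨rfl, rfl, rfl⟩)))))⟩

lemma conn (hn : 5 ≤ n) : (TGraph n).Connected := by
  haveI : NeZero n := ⟨by omega⟩
  rw [SimpleGraph.connected_iff]
  refine ⟨?_, ⟨(0, 0)⟩⟩
  have hring : ∀ (l : Fin 4) (j : ZMod n), (TGraph n).Reachable (l, j) (l, 0) := by
    intro l j
    have key : ∀ k : ℕ, (TGraph n).Reachable (l, (k : ZMod n)) (l, 0) := by
      intro k
      induction k with
      | zero =>
        simp only [Nat.cast_zero]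
        exact SimpleGraph.Reachable.refl _
      | succ m ih =>
        have hadj := ring_adj hn l (m : ZMod n)
        have : (TGraph n).Reachable (l, ((m : ZMod n) + 1)) (l, (m : ZMod n)) :=
          hadj.symm.reachable
        have hcast : ((m + 1 : ℕ) : ZMod n) = (m : ZMod n) + 1 := by push_cast; ring
        rw [hcast]
        exact this.trans ih
    have := key j.val
    rwa [ZMod.natCast_rightInverse j] at this
  have hzero : ∀ l : Fin 4, (TGraph n).Reachable (l, (0 : ZMod n)) (0, 0) := by
    intro l
    fin_cases l
    · exact Reachable.refl _
    · exact (adj01 0).symm.reachable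
    · exact ((adj12 0).symm.reachable).trans (adj01 0).symm.reachable
    · exact ((adj23 0).symm.reachable).trans
        (((adj12 0).symm.reachable).trans (adj01 0).symm.reachable)
  intro u v
  obtain ⟨l, j⟩ := u
  obtain ⟨l', j'⟩ := v
  exact ((hring l j).trans (hzero l)).trans (((hring l' j').trans (hzero l')).symm)

/-- Generic folding lemma. -/
lemma walk_bound {V : Type*} {G : SimpleGraph V} (hc : G.Connected)
    (f : V → V) (A : V → Prop)
    (hf : ∀ u w, G.Adj u w → f u = f w ∨ G.Adj (f u) (f w))
    (hlazy : ∀ u w, G.Adj u w → A u → ¬ A w → f u = f w) :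
    ∀ {u v : V} (p : G.Walk u v),
      G.dist (f u) (f v) ≤ p.length ∧
      (A u → ¬ A v → G.dist (f u) (f v) + 1 ≤ p.length) := by
  intro u v p
  induction p with
  | nil => exact ⟨by simp [SimpleGraph.dist_self], fun hA hnA => absurd hA hnA⟩
  | @cons u w v h p ih =>
    have step : G.dist (f u) (f w) ≤ 1 := by
      rcases hf u w h with he | ha
      · rw [he]; simp [SimpleGraph.dist_self]
      · have := SimpleGraph.dist_le (SimpleGraph.Walk.cons ha SimpleGraph.Walk.nil)
        simpa using this
    have tri : G.dist (f u) (f v) ≤ G.dist (f u) (f w) + G.dist (f w) (f v) :=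
      hc.dist_triangle
    have len : (SimpleGraph.Walk.cons h p).length = p.length + 1 := by simp
    constructor
    · have h1 := ih.1
      omega
    · intro hAu hAv
      by_cases hAw : A w
      · have h2 := ih.2 hAw hAv
        omega
      · have he := hlazy u w h hAu hAw
        have h1 := ih.1
        rw [he]
        omega

def th (x : Fin 4 × ZMod n) : Fin 4 × ZMod n := (![0, 1, 1, 0] x.1, x.2)
def th' (x : Fin 4 × ZMod n) : Fin 4 × ZMod n := (![3, 2, 2, 3] x.1, x.2)

lemma th_edge (hn : 5 ≤ n) : ∀ u w, (TGraph n).Adj u w →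
    th u = th w ∨ (TGraph n).Adj (th u) (th w) := by
  rintro ⟨l1, j1⟩ ⟨l2, j2⟩ h
  rw [TGraph, SimpleGraph.fromRel_adj] at h
  obtain ⟨-, hrel⟩ := h
  rcases hrel with (⟨h1, h2⟩ | ⟨h1, h2, h3⟩ | ⟨h1, h2, h3⟩ | ⟨h1, h2, h3⟩ | ⟨h1, h2, h3⟩ | ⟨h1, h2, h3⟩) |
    (⟨h1, h2⟩ | ⟨h1, h2, h3⟩ | ⟨h1, h2, h3⟩ | ⟨h1, h2, h3⟩ | ⟨h1, h2, h3⟩ | ⟨h1, h2, h3⟩)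
  · subst h1; subst h2; exact Or.inr (ring_adj hn _ j1)
  · subst h1; subst h2; subst h3; exact Or.inr (adj01 j2)
  · subst h1; subst h2; subst h3; exact Or.inl rfl
  · subst h1; subst h2; subst h3; exact Or.inr (adj01 j2).symm
  · subst h1; subst h2; subst h3; exact Or.inr (chord_ab j2)
  · subst h1; subst h2; subst h3; exact Or.inr (chord_ab j1).symm
  · subst h1; subst h2; exact Or.inr (ring_adj hn _ j2).symm
  · subst h1; subst h2; subst h3; exact Or.inr (adj01 j1).symm
  · subst h1; subst h2; subst h3; exact Or.inl rfl
  · subst h1; subst h2; subst h3; exact Or.inr (adj01 j1)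
  · subst h1; subst h2; subst h3; exact Or.inr (chord_ab j1).symm
  · subst h1; subst h2; subst h3; exact Or.inr (chord_ab j2)

lemma th'_edge (hn : 5 ≤ n) : ∀ u w, (TGraph n).Adj u w →
    th' u = th' w ∨ (TGraph n).Adj (th' u) (th' w) := by
  rintro ⟨l1, j1⟩ ⟨l2, j2⟩ h
  rw [TGraph, SimpleGraph.fromRel_adj] at h
  obtain ⟨-, hrel⟩ := h
  rcases hrel with (⟨h1, h2⟩ | ⟨h1, h2, h3⟩ | ⟨h1, h2, h3⟩ | ⟨h1, h2, h3⟩ | ⟨h1, h2, h3⟩ | ⟨h1, h2, h3⟩) |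
    (⟨h1, h2⟩ | ⟨h1, h2, h3⟩ | ⟨h1, h2, h3⟩ | ⟨h1, h2, h3⟩ | ⟨h1, h2, h3⟩ | ⟨h1, h2, h3⟩)
  · subst h1; subst h2; exact Or.inr (ring_adj hn _ j1)
  · subst h1; subst h2; subst h3; exact Or.inr (adj23 j2).symm
  · subst h1; subst h2; subst h3; exact Or.inl rfl
  · subst h1; subst h2; subst h3; exact Or.inr (adj23 j2)
  · subst h1; subst h2; subst h3; exact Or.inr (chord_cd j2).symm
  · subst h1; subst h2; subst h3; exact Or.inr (chord_cd j1)
  · subst h1; subst h2; exact Or.inr (ring_adj hn _ j2).symm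
  · subst h1; subst h2; subst h3; exact Or.inr (adj23 j1)
  · subst h1; subst h2; subst h3; exact Or.inl rfl
  · subst h1; subst h2; subst h3; exact Or.inr (adj23 j1).symm
  · subst h1; subst h2; subst h3; exact Or.inr (chord_cd j1)
  · subst h1; subst h2; subst h3; exact Or.inr (chord_cd j2).symm

def Ahi (x : Fin 4 × ZMod n) : Prop := x.1 = 2 ∨ x.1 = 3
def Alo (x : Fin 4 × ZMod n) : Prop := x.1 = 0 ∨ x.1 = 1

lemma th_lazy : ∀ u w : Fin 4 × ZMod n, (TGraph n).Adj u w → Ahi u → ¬ Ahi w → th u = th w := by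
  rintro ⟨l1, j1⟩ ⟨l2, j2⟩ h hu hw
  rw [TGraph, SimpleGraph.fromRel_adj] at h
  obtain ⟨-, hrel⟩ := h
  simp only [Ahi] at hu hw
  rcases hrel with (⟨h1, h2⟩ | ⟨h1, h2, h3⟩ | ⟨h1, h2, h3⟩ | ⟨h1, h2, h3⟩ | ⟨h1, h2, h3⟩ | ⟨h1, h2, h3⟩) |
    (⟨h1, h2⟩ | ⟨h1, h2, h3⟩ | ⟨h1, h2, h3⟩ | ⟨h1, h2, h3⟩ | ⟨h1, h2, h3⟩ | ⟨h1, h2, h3⟩)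
  · subst h1; exact absurd hu hw
  · subst h1; exact absurd hu (by decide)
  · subst h1; exact absurd hu (by decide)
  · subst h1; subst h2; exact absurd (Or.inr rfl) hw
  · subst h1; exact absurd hu (by decide)
  · subst h1; subst h2; exact absurd (Or.inr rfl) hw
  · subst h1; exact absurd hu hw
  · subst h2; exact absurd hu (by decide)
  · subst h1; subst h2; subst h3; rfl
  · subst h1; exact absurd (Or.inl rfl) hw
  · subst h2; exact absurd hu (by decide)
  · subst h1; exact absurd (Or.inl rfl) hw

lemma th'_lazy : ∀ u w : Fin 4 × ZMod n, (TGraph n).Adj u w → Alo u → ¬ Alo w → th' u = th' w := by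
  rintro ⟨l1, j1⟩ ⟨l2, j2⟩ h hu hw
  rw [TGraph, SimpleGraph.fromRel_adj] at h
  obtain ⟨-, hrel⟩ := h
  simp only [Alo] at hu hw
  rcases hrel with (⟨h1, h2⟩ | ⟨h1, h2, h3⟩ | ⟨h1, h2, h3⟩ | ⟨h1, h2, h3⟩ | ⟨h1, h2, h3⟩ | ⟨h1, h2, h3⟩) |
    (⟨h1, h2⟩ | ⟨h1, h2, h3⟩ | ⟨h1, h2, h3⟩ | ⟨h1, h2, h3⟩ | ⟨h1, h2, h3⟩ | ⟨h1, h2, h3⟩)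
  · subst h1; exact absurd hu hw
  · subst h2; exact absurd (Or.inr rfl) hw
  · subst h1; subst h2; subst h3; rfl
  · subst h1; exact absurd hu (by decide)
  · subst h2; exact absurd (Or.inr rfl) hw
  · subst h1; exact absurd hu (by decide)
  · subst h1; exact absurd hu hw
  · subst h1; exact absurd (Or.inl rfl) hw
  · subst h2; exact absurd hu (by decide)
  · subst h2; exact absurd hu (by decide)
  · subst h1; exact absurd (Or.inl rfl) hw
  · subst h2; exact absurd hu (by decide)

lemma key (hn : 5 ≤ n) (i : ZMod n) (x : Fin 4 × ZMod n) :
    ((TGraph n).dist (1, i) x ≠ (TGraph n).dist (2, i) x) ∧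
    ((TGraph n).dist (0, i) x ≠ (TGraph n).dist (3, i) x) := by
  have hc := conn hn
  obtain ⟨lx, jx⟩ := x
  by_cases hx : Ahi ((lx, jx) : Fin 4 × ZMod n)
  · -- x is in the high layers; fold walks from (1,i),(0,i) via th'
    have hfix : th' ((lx, jx) : Fin 4 × ZMod n) = (lx, jx) := by
      rcases hx with h | h <;> (rw [show lx = _ from h]; rfl)
    have hnlo : ¬ Alo ((lx, jx) : Fin 4 × ZMod n) := by
      rcases hx with h | h <;> (rw [show lx = _ from h]) <;> simp [Alo]
    obtain ⟨p1, hp1⟩ := hc.exists_walk_length_eq_dist (1, i) (lx, jx)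
    obtain ⟨p0, hp0⟩ := hc.exists_walk_length_eq_dist (0, i) (lx, jx)
    have h1 := (walk_bound hc th' Alo (th'_edge hn) th'_lazy p1).2 (Or.inr rfl) hnlo
    have h0 := (walk_bound hc th' Alo (th'_edge hn) th'_lazy p0).2 (Or.inl rfl) hnlo
    rw [hp1] at h1
    rw [hp0] at h0
    rw [show th' ((1, i) : Fin 4 × ZMod n) = (2, i) from rfl, hfix] at h1
    rw [show th' ((0, i) : Fin 4 × ZMod n) = (3, i) from rfl, hfix] at h0
    exact ⟨by omega, by omega⟩
  · -- x is in the low layers; fold walks from (2,i),(3,i) via th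
    have hlo : Alo ((lx, jx) : Fin 4 × ZMod n) := by
      simp only [Ahi] at hx
      fin_cases lx <;> simp_all [Alo]
    have hfix : th ((lx, jx) : Fin 4 × ZMod n) = (lx, jx) := by
      rcases hlo with h | h <;> (rw [show lx = _ from h]; rfl)
    obtain ⟨p2, hp2⟩ := hc.exists_walk_length_eq_dist (2, i) (lx, jx)
    obtain ⟨p3, hp3⟩ := hc.exists_walk_length_eq_dist (3, i) (lx, jx)
    have h2 := (walk_bound hc th Ahi (th_edge hn) th_lazy p2).2 (Or.inl rfl) hx
    have h3 := (walk_bound hc th Ahi (th_edge hn) th_lazy p3).2 (Or.inr rfl) hx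
    rw [hp2] at h2
    rw [hp3] at h3
    rw [show th ((2, i) : Fin 4 × ZMod n) = (1, i) from rfl, hfix] at h2
    rw [show th ((3, i) : Fin 4 × ZMod n) = (0, i) from rfl, hfix] at h3
    exact ⟨by omega, by omega⟩

end TProofAux

theorem stmt12 (n : ℕ) (hn : 5 ≤ n) : 2 * n ≤ eqdim (TGraph n) := by
  classical
  haveI : NeZero n := ⟨by omega⟩
  apply le_csInf
  · exact ⟨(Finset.univ : Finset (Fin 4 × ZMod n)).card, Finset.univ,
      fun u v hu _ _ => absurd (by simp : u ∈ (↑(Finset.univ : Finset (Fin 4 × ZMod n)) : Set _)) hu, rfl⟩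
  · rintro k ⟨S, hS, rfl⟩
    have hpair : ∀ i : ZMod n, ((1, i) ∈ S ∨ (2, i) ∈ S) ∧ ((0, i) ∈ S ∨ (3, i) ∈ S) := by
      intro i
      constructor
      · by_contra hcon
        push_neg at hcon
        obtain ⟨x, hxS, hxd⟩ := hS (1, i) (2, i) (by simpa using hcon.1) (by simpa using hcon.2)
          (by intro h; rw [Prod.mk.injEq] at h; exact absurd h.1 (by decide))
        exact (TProofAux.key hn i x).1 hxd
      · by_contra hcon
        push_neg at hcon
        obtain ⟨x, hxS, hxd⟩ := hS (0, i) (3, i) (by simpa using hcon.1) (by simpa using hcon.2)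
          (by intro h; rw [Prod.mk.injEq] at h; exact absurd h.1 (by decide))
        exact (TProofAux.key hn i x).2 hxd
    set F : Bool × ZMod n → Fin 4 × ZMod n := fun p =>
      cond p.1 (if (1, p.2) ∈ S then ((1 : Fin 4), p.2) else (2, p.2))
        (if (0, p.2) ∈ S then ((0 : Fin 4), p.2) else (3, p.2)) with hF
    have hmem : ∀ p, F p ∈ S := by
      rintro ⟨t, i⟩
      cases t <;> simp only [hF, cond_true, cond_false] <;> split_ifs with h'
      · exact h'
      · rcases (hpair i).2 with h | h
        · exact absurd h h'
        · exact h
      · exact h'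
      · rcases (hpair i).1 with h | h
        · exact absurd h h'
        · exact h
    have hinj : Set.InjOn F (Finset.univ : Finset (Bool × ZMod n)) := by
      rintro ⟨t, i⟩ - ⟨s, j⟩ - h
      cases t <;> cases s <;>
        simp only [hF, cond_true, cond_false] at h <;>
        split_ifs at h <;>
        rw [Prod.mk.injEq] at h <;>
        first
          | (exact absurd h.1 (by decide))
          | (rw [Prod.mk.injEq]; exact ⟨rfl, h.2⟩)
    calc 2 * n = (Finset.univ : Finset (Bool × ZMod n)).card := by
          simp [Finset.card_univ, ZMod.card]
      _ ≤ S.card := Finset.card_le_card_of_injOn F (fun p _ => hmem p) hinj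
end

section
/- For n ≥ 5, eqdim(T_n) = 2n. -/
/-!
Distances in `T_n` have a closed form: from `(a, i)` to `(b, i + x)` one crosses `|a - b|` layers
and goes the shorter way around the ring, forwards `x` steps or backwards `n - x`, where a diagonal
edge entering an outer layer saves one forward step and one leaving an outer layer saves one
backward step. The formula is verified by showing that it vanishes only at the source, changes by
at most one along every edge, and drops by one along some edge out of every other vertex.

By the formula, `d(a_i, v) ≠ d(d_i, v)` and `d(b_i, v) ≠ d(c_i, v)` for every vertex `v`, so a
distance-equalizer set meets each of the `2n` pairs `{a_i, d_i}`, `{b_i, c_i}`. Conversely, two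
vertices of the layers `a` and `c` are equidistant from a vertex of layer `b` or `d` placed roughly
half-way between them, so these two layers form a distance-equalizer set of size `2n`.
-/

open SimpleGraph Finset

theorem SimpleGraph.dist_eq_of_forall_adj {V : Type*} {G : SimpleGraph V} {u : V} (h : V → ℕ)
    (hu : h u = 0) (hle : ∀ v w, G.Adj v w → h v ≤ h w + 1)
    (hdesc : ∀ v, v ≠ u → ∃ w, G.Adj v w ∧ h w < h v) (v : V) :
    G.dist u v = h v := by
  have le_length : ∀ {v w} (p : G.Walk v w), h v ≤ p.length + h w := by
    intro v w p
    induction p with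
    | nil => simp
    | cons hadj _ ih => have := hle _ _ hadj; rw [Walk.length_cons]; omega
  have exists_walk : ∀ k v, h v = k → ∃ p : G.Walk v u, p.length = k := by
    intro k
    induction k with
    | zero =>
      intro v hv
      obtain rfl : v = u := by
        by_contra hne
        obtain ⟨w, -, hw⟩ := hdesc v hne
        omega
      exact ⟨.nil, rfl⟩
    | succ k ih =>
      intro v hv
      obtain ⟨w, hadj, hw⟩ := hdesc v (by rintro rfl; omega)
      obtain ⟨p, hp⟩ := ih w (by have := hle _ _ hadj; omega)
      exact ⟨.cons hadj p, by rw [Walk.length_cons, hp]⟩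
  obtain ⟨p, hp⟩ := exists_walk _ v rfl
  rw [dist_comm]
  refine le_antisymm (hp ▸ dist_le p) ?_
  obtain ⟨q, hq⟩ := p.reachable.exists_walk_length_eq_dist
  simpa [hu, hq] using le_length q

theorem IsDistEqSet.mem_or_mem_of_forall_dist_ne {V : Type*} {G : SimpleGraph V} {S : Set V}
    (hS : IsDistEqSet G S) {u v : V} (huv : u ≠ v) (h : ∀ x, G.dist u x ≠ G.dist v x) :
    u ∈ S ∨ v ∈ S := by
  by_contra! hS'
  obtain ⟨x, -, hx⟩ := hS u v hS'.1 hS'.2 huv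
  exact h x hx

theorem eqdim_eq_of_forall_le {V : Type*} {G : SimpleGraph V} {k : ℕ}
    (hex : ∃ S : Finset V, IsDistEqSet G S ∧ S.card = k)
    (hle : ∀ S : Finset V, IsDistEqSet G S → k ≤ S.card) : eqdim G = k :=
  le_antisymm (Nat.sInf_le hex) (le_csInf ⟨k, hex⟩ (by rintro _ ⟨S, hS, rfl⟩; exact hle S hS))

namespace ZMod

variable {n : ℕ}

theorem val_add_eq_or [NeZero n] (a b : ZMod n) :
    (a + b).val = a.val + b.val ∨ (a + b).val + n = a.val + b.val := by
  rcases lt_or_ge (a.val + b.val) n with h | h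
  · exact .inl (val_add_of_lt h)
  · exact .inr (val_add_val_of_le h).symm

theorem val_add_one_eq_or [Fact (1 < n)] (x : ZMod n) :
    (x + 1).val = x.val + 1 ∨ (x + 1).val + n = x.val + 1 := by
  simpa [val_one] using val_add_eq_or x 1

theorem val_sub_one_eq_or [Fact (1 < n)] (x : ZMod n) :
    x.val = (x - 1).val + 1 ∨ x.val + n = (x - 1).val + 1 := by
  have := val_add_one_eq_or (x - 1)
  rwa [_root_.sub_add_cancel] at this

theorem val_sub_add_val_eq_or [NeZero n] (y x : ZMod n) :
    (y - x).val + x.val = y.val ∨ (y - x).val + x.val = y.val + n := by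
  have := val_add_eq_or (y - x) x
  rw [_root_.sub_add_cancel] at this
  omega

end ZMod

namespace TGraph

variable {n : ℕ}

def verticalNeighbors (b : Fin 4) (j : ZMod n) : List (Fin 4 × ZMod n) :=
  ![[(1, j), (1, j - 1)], [(0, j), (0, j + 1), (2, j)], [(1, j), (3, j), (3, j + 1)],
    [(2, j), (2, j - 1)]] b

def neighbors (b : Fin 4) (j : ZMod n) : List (Fin 4 × ZMod n) :=
  (b, j + 1) :: (b, j - 1) :: verticalNeighbors b j

theorem adj_iff_mem_neighbors [Fact (1 < n)] (b : Fin 4) (j : ZMod n) (w : Fin 4 × ZMod n) :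
    (TGraph n).Adj (b, j) w ↔ w ∈ neighbors b j := by
  obtain ⟨c, k⟩ := w
  rw [TGraph, fromRel_adj]
  constructor
  · rintro ⟨-, h | h⟩ <;>
      rcases h with ⟨rfl, rfl⟩ | ⟨rfl, rfl, rfl⟩ | ⟨rfl, rfl, rfl⟩ | ⟨rfl, rfl, rfl⟩ |
        ⟨rfl, rfl, rfl⟩ | ⟨rfl, rfl, rfl⟩ <;> simp [neighbors, verticalNeighbors]
  · intro h
    have : j ≠ j - 1 := fun h => one_ne_zero (sub_eq_self.mp h.symm)
    fin_cases b <;> simp [neighbors, verticalNeighbors] at h <;>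
      repeat' rcases h with ⟨rfl, rfl⟩ | h
    all_goals simp_all

/-- A path leaving the outer layer `a` for another layer can take a diagonal edge (`a_i b_{i-1}` or
`d_i c_{i-1}`) and gain one step backwards around the ring; one entering an outer layer gains one
step forwards. -/
def diagBonus (a b : Fin 4) : ℕ := if (a = 0 ∨ a = 3) ∧ a ≠ b then 1 else 0

/-- The distance from `(a, i)` to `(b, i + x)` (see `dist_eq_tDist`). At `x = 0` the truncated
`x.val - 1` is `0`: the forward diagonal is then simply not used. -/
def tDist (n : ℕ) (a b : Fin 4) (x : ZMod n) : ℕ :=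
  Nat.dist a b + min (x.val - diagBonus b a) (n - x.val - diagBonus a b)

theorem tDist_add_one_le [Fact (1 < n)] (a b : Fin 4) (x : ZMod n) :
    tDist n a b (x + 1) ≤ tDist n a b x + 1 := by
  have := x.val_add_one_eq_or
  have := x.val_lt
  simp only [tDist]
  omega

theorem tDist_le_tDist_add_one [Fact (1 < n)] (a b : Fin 4) (x : ZMod n) :
    tDist n a b x ≤ tDist n a b (x + 1) + 1 := by
  have := x.val_add_one_eq_or
  have := x.val_lt
  simp only [tDist]
  omega

theorem tDist_sub_one_lt [Fact (1 < n)] {a b : Fin 4} {x : ZMod n}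
    (h : 1 ≤ x.val - diagBonus b a) (h' : x.val - diagBonus b a ≤ n - x.val - diagBonus a b) :
    tDist n a b (x - 1) < tDist n a b x := by
  have := x.val_sub_one_eq_or
  have := (x - 1).val_lt
  simp only [tDist]
  omega

theorem tDist_add_one_lt [Fact (1 < n)] {a b : Fin 4} {x : ZMod n}
    (h : 1 ≤ n - x.val - diagBonus a b) (h' : n - x.val - diagBonus a b < x.val - diagBonus b a) :
    tDist n a b (x + 1) < tDist n a b x := by
  have := x.val_add_one_eq_or
  have := x.val_lt
  simp only [tDist]
  omega

theorem tDist_le_of_mem_verticalNeighbors [Fact (1 < n)] (a b : Fin 4) (i j : ZMod n)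
    {w : Fin 4 × ZMod n} (hw : w ∈ verticalNeighbors b j) :
    tDist n a b (j - i) ≤ tDist n a w.1 (w.2 - i) + 1 := by
  have hsucc := (j - i).val_add_one_eq_or
  have hpred := (j - i).val_sub_one_eq_or
  have := (j - i).val_lt
  have := (j - i - 1).val_lt
  rw [← add_sub_right_comm] at hsucc
  rw [sub_right_comm] at hpred this
  fin_cases b <;> simp [verticalNeighbors] at hw <;> repeat' rcases hw with rfl | hw
  all_goals
    fin_cases a <;>
      simp +decide only [tDist, diagBonus, Nat.dist, Fin.isValue, Fin.val_zero, ite_true,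
        ite_false] <;>
      omega

theorem exists_mem_verticalNeighbors_tDist_lt [Fact (1 < n)] {a b : Fin 4} (i j : ZMod n)
    (hba : b ≠ a)
    (hmin : min ((j - i).val - diagBonus b a) (n - (j - i).val - diagBonus a b) = 0) :
    ∃ w ∈ verticalNeighbors b j, tDist n a w.1 (w.2 - i) < tDist n a b (j - i) := by
  have hsucc := (j - i).val_add_one_eq_or
  have hpred := (j - i).val_sub_one_eq_or
  have := (j - i).val_lt
  have := (j - i - 1).val_lt
  rw [← add_sub_right_comm] at hsucc
  rw [sub_right_comm] at hpred this
  fin_cases b <;> fin_cases a <;>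
    simp +decide only [verticalNeighbors, Fin.zero_eta, Fin.mk_one, Fin.reduceFinMk,
      Matrix.cons_val_zero, Matrix.cons_val_one, Matrix.cons_val, List.mem_cons, List.not_mem_nil,
      or_false, exists_eq_or_imp, exists_eq_left, tDist, diagBonus, Nat.dist, Fin.isValue,
      Fin.val_zero, ite_true, ite_false] at hba hmin ⊢ <;>
    omega

theorem tDist_le_of_adj [Fact (1 < n)] (a : Fin 4) (i : ZMod n) {v w : Fin 4 × ZMod n}
    (h : (TGraph n).Adj v w) : tDist n a v.1 (v.2 - i) ≤ tDist n a w.1 (w.2 - i) + 1 := by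
  obtain ⟨b, j⟩ := v
  rw [adj_iff_mem_neighbors, neighbors] at h
  rcases List.mem_cons.1 h with rfl | h
  · rw [add_sub_right_comm]
    exact tDist_le_tDist_add_one a b _
  rcases List.mem_cons.1 h with rfl | h
  · rw [sub_right_comm]
    have := tDist_add_one_le a b (j - i - 1)
    rwa [sub_add_cancel] at this
  exact tDist_le_of_mem_verticalNeighbors a b i j h

theorem exists_adj_tDist_lt [Fact (1 < n)] (a : Fin 4) (i : ZMod n) {v : Fin 4 × ZMod n}
    (hv : v ≠ (a, i)) :
    ∃ w, (TGraph n).Adj v w ∧ tDist n a w.1 (w.2 - i) < tDist n a v.1 (v.2 - i) := by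
  obtain ⟨b, j⟩ := v
  simp only [adj_iff_mem_neighbors, neighbors, List.mem_cons]
  by_cases hF : 1 ≤ (j - i).val - diagBonus b a ∧
      (j - i).val - diagBonus b a ≤ n - (j - i).val - diagBonus a b
  · exact ⟨(b, j - 1), by simp, by rw [sub_right_comm]; exact tDist_sub_one_lt hF.1 hF.2⟩
  by_cases hB : 1 ≤ n - (j - i).val - diagBonus a b ∧
      n - (j - i).val - diagBonus a b < (j - i).val - diagBonus b a
  · exact ⟨(b, j + 1), by simp, by rw [add_sub_right_comm]; exact tDist_add_one_lt hB.1 hB.2⟩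
  -- Otherwise no step around the ring is left, only the layer gap.
  have := (j - i).val_lt
  have hba : b ≠ a := by
    rintro rfl
    have hx : (j - i).val = 0 := by
      simp only [diagBonus, ne_eq, not_true_eq_false, and_false, ite_false] at hF hB
      omega
    rw [ZMod.val_eq_zero, sub_eq_zero] at hx
    exact hv (by rw [hx])
  obtain ⟨w, hw, hlt⟩ := exists_mem_verticalNeighbors_tDist_lt i j hba (by omega)
  exact ⟨w, .inr (.inr hw), hlt⟩

theorem dist_eq_tDist [Fact (1 < n)] (a : Fin 4) (i : ZMod n) (v : Fin 4 × ZMod n) :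
    (TGraph n).dist (a, i) v = tDist n a v.1 (v.2 - i) :=
  dist_eq_of_forall_adj (fun v => tDist n a v.1 (v.2 - i)) (by simp [tDist])
    (fun _ _ => tDist_le_of_adj a i) (fun _ => exists_adj_tDist_lt a i) v

theorem tDist_ne_tDist_rev [NeZero n] (a c : Fin 4) (y : ZMod n) :
    tDist n a c y ≠ tDist n a.rev c y := by
  have := y.val_lt
  fin_cases a <;> fin_cases c <;> simp [tDist, diagBonus, Nat.dist, Fin.rev] <;> omega

theorem card_le_of_isDistEqSet [Fact (1 < n)] (S : Finset (Fin 4 × ZMod n))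
    (hS : IsDistEqSet (TGraph n) S) : 2 * n ≤ #S := by
  have hpair : ∀ a i, (a, i) ∈ S ∨ (a.rev, i) ∈ S := fun a i =>
    hS.mem_or_mem_of_forall_dist_ne (by fin_cases a <;> simp [Fin.rev]) fun x => by
      rw [dist_eq_tDist, dist_eq_tDist]
      exact tDist_ne_tDist_rev a _ _
  -- `(a, i)` and `(a.rev, i)` have the same image: layers `0, 3` go to `true`, `1, 2` to `false`.
  have hsurj : Set.SurjOn (fun v : Fin 4 × ZMod n => (decide (v.1 = 0 ∨ v.1 = 3), v.2)) S
      (univ : Finset (Bool × ZMod n)) := by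
    rintro ⟨_ | _, i⟩ -
    · rcases hpair 1 i with h | h <;> exact ⟨_, h, by simp [Fin.rev]⟩
    · rcases hpair 0 i with h | h <;> exact ⟨_, h, by simp [Fin.rev]⟩
  calc 2 * n = #(univ : Finset (Bool × ZMod n)) := by simp
    _ ≤ #S := card_le_card_of_surjOn _ hsurj

theorem tDist_natCast_eq_of [NeZero n] {a b c : Fin 4} {x : ZMod n} {u : ℕ} (hu : u < n)
    (h : ∀ p < n, (p + x.val = u ∨ p + x.val = u + n) →
      Nat.dist a c + min (u - diagBonus c a) (n - u - diagBonus a c) =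
        Nat.dist b c + min (p - diagBonus c b) (n - p - diagBonus b c)) :
    tDist n a c u = tDist n b c (u - x) := by
  have := ZMod.val_sub_add_val_eq_or (u : ZMod n) x
  rw [ZMod.val_cast_of_lt hu] at this
  rw [tDist, tDist, ZMod.val_cast_of_lt hu]
  exact h _ (ZMod.val_lt _) this

theorem exists_tDist_eq_tDist_sub (hn : 4 ≤ n) {a b : Fin 4} (ha : a = 0 ∨ a = 2)
    (hb : b = 0 ∨ b = 2) (x : ZMod n) :
    ∃ c, (c = 1 ∨ c = 3) ∧ ∃ y, tDist n a c y = tDist n b c (y - x) := by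
  have : NeZero n := ⟨by omega⟩
  wlog hab : a ≤ b generalizing a b x
  · obtain ⟨c, hc, y, hy⟩ := this hb ha (-x) (le_of_not_ge hab)
    refine ⟨c, hc, y + x, ?_⟩
    rw [add_sub_cancel_right, hy, sub_neg_eq_add]
  -- `y` lies roughly half-way between `0` and `x`; the layer `c` and the rounding depend on parity.
  have := x.val_lt
  obtain ⟨t, hk⟩ := Nat.even_or_odd' x.val
  rcases ha with rfl | rfl <;> rcases hb with rfl | rfl
  · rcases hk with hk | hk
    · refine ⟨3, .inr rfl, _, tDist_natCast_eq_of (u := t) (by omega) fun p _ _ => ?_⟩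
      simp [diagBonus, Nat.dist]; omega
    · refine ⟨1, .inl rfl, _, tDist_natCast_eq_of (u := t) (by omega) fun p _ _ => ?_⟩
      simp [diagBonus, Nat.dist]; omega
  · rcases hk with hk | hk
    · refine ⟨1, .inl rfl, _, tDist_natCast_eq_of (u := t) (by omega) fun p _ _ => ?_⟩
      simp [diagBonus, Nat.dist]; omega
    obtain ⟨s, hs | hs⟩ := Nat.even_or_odd' n
    · refine ⟨1, .inl rfl, _, tDist_natCast_eq_of (u := t + s) (by omega) fun p _ _ => ?_⟩
      simp [diagBonus, Nat.dist]; omega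
    rcases Nat.eq_zero_or_pos t with rfl | ht
    · refine ⟨3, .inr rfl, _, tDist_natCast_eq_of (u := s + 2) (by omega) fun p _ _ => ?_⟩
      simp [diagBonus, Nat.dist]; omega
    · refine ⟨3, .inr rfl, _, tDist_natCast_eq_of (u := t) (by omega) fun p _ _ => ?_⟩
      simp [diagBonus, Nat.dist]; omega
  · exact absurd hab (by decide)
  · rcases hk with hk | hk
    · refine ⟨1, .inl rfl, _, tDist_natCast_eq_of (u := t) (by omega) fun p _ _ => ?_⟩
      simp [diagBonus, Nat.dist]; omega
    · refine ⟨3, .inr rfl, _, tDist_natCast_eq_of (u := t + 1) (by omega) fun p _ _ => ?_⟩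
      simp [diagBonus, Nat.dist]; omega

theorem isDistEqSet_layer_one_or_three (hn : 4 ≤ n) :
    IsDistEqSet (TGraph n) {v | v.1 = 1 ∨ v.1 = 3} := by
  have : Fact (1 < n) := ⟨by omega⟩
  rintro ⟨a, i⟩ ⟨b, j⟩ ha hb -
  have hev : ∀ l : Fin 4, ¬(l = 1 ∨ l = 3) → l = 0 ∨ l = 2 := by decide
  obtain ⟨c, hc, y, hy⟩ := exists_tDist_eq_tDist_sub hn (hev a ha) (hev b hb) (j - i)
  refine ⟨(c, i + y), hc, ?_⟩
  rw [dist_eq_tDist, dist_eq_tDist, add_sub_cancel_left, hy]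
  congr 1
  ring

theorem exists_isDistEqSet_card (hn : 4 ≤ n) :
    ∃ S : Finset (Fin 4 × ZMod n), IsDistEqSet (TGraph n) S ∧ #S = 2 * n := by
  have : NeZero n := ⟨by omega⟩
  refine ⟨{1, 3} ×ˢ univ, ?_, by simp⟩
  convert isDistEqSet_layer_one_or_three hn
  ext
  simp

end TGraph

theorem stmt14 (n : ℕ) (hn : 5 ≤ n) : eqdim (TGraph n) = 2 * n := by
  have : Fact (1 < n) := ⟨by omega⟩
  exact eqdim_eq_of_forall_le (TGraph.exists_isDistEqSet_card (by omega))
    TGraph.card_le_of_isDistEqSet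
end
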